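/- arXiv:2306.13185 — 2 statements merged into one kernel-verified Lean document; each statement's English description precedes it below -/
import Mathlib

section
/- The ridgeless omniscient risk estimate satisfies the lower bound R̃_0 ≥ E_0 · σ². Consequently, if for every δ ≥ 0 a positive solution κ_δ exists, the predicted cost of overfitting C̃ = R̃_0 / inf_{δ ≥ 0} R̃_δ satisfies E_0 · σ² / inf_{δ ≥ 0} R̃_δ ≤ C̃ ≤ E_0, i.e. σ²/inf_{δ ≥ 0} R̃_δ ≤ C̃/E_0 ≤ 1. -/
/-!
Write `L_i(c) = λ_i / (λ_i + c)`. Since `0 ≤ L_i < 1`, we have `∑ L_i² < ∑ L_i ≤ n`, so every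
overfitting coefficient satisfies `E_δ ≥ 1`. Since `c ↦ ∑ L_i(c)` is strictly decreasing and
`∑ L_i(κ_δ) ≤ n = ∑ L_i(κ_0)`, the ridgeless constant is the smallest, `κ_0 ≤ κ_δ`; the bias terms
`(1 - L_i(c))² = (c / (λ_i + c))²` increase with `c`. Hence every `R̃_δ` is at least
`m = ∑ (1 - L_i(κ_0))² v_i² + σ²`, while `R̃_0 = E_0 · m`.
-/

open Set

noncomputable def learnability (lam : ℕ → ℝ) (c : ℝ) (i : ℕ) : ℝ := lam i / (lam i + c)

namespace learnability

variable {lam : ℕ → ℝ} {c c' : ℝ} {i : ℕ}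

lemma nonneg (hi : 0 ≤ lam i) (hc : 0 < c) : 0 ≤ learnability lam c i := by
  unfold learnability; positivity

lemma pos (hi : 0 < lam i) (hc : 0 < c) : 0 < learnability lam c i := by
  unfold learnability; positivity

lemma lt_one (hi : 0 ≤ lam i) (hc : 0 < c) : learnability lam c i < 1 :=
  (div_lt_one (by linarith)).2 (by linarith)

lemma le_div (hi : 0 ≤ lam i) (hc : 0 < c) : learnability lam c i ≤ lam i / c :=
  div_le_div_of_nonneg_left hi hc (by linarith)

lemma anti (hi : 0 ≤ lam i) (hc : 0 < c) (h : c ≤ c') :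
    learnability lam c' i ≤ learnability lam c i :=
  div_le_div_of_nonneg_left hi (by linarith) (by linarith)

lemma strictAnti (hi : 0 < lam i) (hc : 0 < c) (h : c < c') :
    learnability lam c' i < learnability lam c i :=
  div_lt_div_of_pos_left hi (by linarith) (by linarith)

lemma sq_le (hi : 0 ≤ lam i) (hc : 0 < c) : learnability lam c i ^ 2 ≤ learnability lam c i :=
  pow_le_of_le_one (nonneg hi hc) (lt_one hi hc).le two_ne_zero

lemma one_sub_sq_le_one_sub_sq (hi : 0 ≤ lam i) (hc : 0 < c) (h : c ≤ c') :
    (1 - learnability lam c i) ^ 2 ≤ (1 - learnability lam c' i) ^ 2 := by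
  have := lt_one hi hc
  have := anti hi hc h
  exact pow_le_pow_left₀ (by linarith) (by linarith) 2

variable (hlam : ∀ i, 0 ≤ lam i) (hsum : Summable lam)
include hlam hsum

lemma summable (hc : 0 < c) : Summable (learnability lam c) :=
  .of_nonneg_of_le (fun i => nonneg (hlam i) hc) (fun i => le_div (hlam i) hc) (hsum.div_const c)

lemma summable_sq (hc : 0 < c) : Summable fun i => learnability lam c i ^ 2 :=
  .of_nonneg_of_le (fun _ => sq_nonneg _) (fun i => sq_le (hlam i) hc) (summable hlam hsum hc)

lemma tsum_sq_lt_tsum (hi : 0 < lam i) (hc : 0 < c) :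
    ∑' j, learnability lam c j ^ 2 < ∑' j, learnability lam c j :=
  Summable.tsum_lt_tsum (fun j => sq_le (hlam j) hc)
    (pow_lt_self_of_lt_one₀ (pos hi hc) (lt_one hi.le hc) one_lt_two)
    (summable_sq hlam hsum hc) (summable hlam hsum hc)

lemma strictAntiOn_tsum (hi : 0 < lam i) :
    StrictAntiOn (fun c => ∑' j, learnability lam c j) (Ioi 0) := by
  intro c hc c' hc' h
  exact Summable.tsum_lt_tsum (fun j => anti (hlam j) hc h.le) (strictAnti hi hc h)
    (summable hlam hsum hc') (summable hlam hsum hc)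

lemma one_le_div_sub_tsum_sq {n : ℝ} (hi : 0 < lam i) (hc : 0 < c)
    (hn : ∑' j, learnability lam c j ≤ n) :
    1 ≤ n / (n - ∑' j, learnability lam c j ^ 2) := by
  have hlt := tsum_sq_lt_tsum hlam hsum hi hc
  have hsq : 0 ≤ ∑' j, learnability lam c j ^ 2 := tsum_nonneg fun _ => sq_nonneg _
  rw [one_le_div₀ (by linarith)]
  linarith

omit hsum in
lemma summable_one_sub_sq_mul {v : ℕ → ℝ} (hv : Summable fun i => v i ^ 2) (hc : 0 < c) :
    Summable fun j => (1 - learnability lam c j) ^ 2 * v j ^ 2 :=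
  .of_nonneg_of_le (fun _ => by positivity)
    (fun j => mul_le_of_le_one_left (sq_nonneg _)
      (pow_le_one₀ (by linarith [lt_one (hlam j) hc]) (by linarith [nonneg (hlam j) hc]))) hv

omit hsum in
lemma tsum_one_sub_sq_mul_mono {v : ℕ → ℝ} (hv : Summable fun i => v i ^ 2) (hc : 0 < c)
    (h : c ≤ c') :
    ∑' j, (1 - learnability lam c j) ^ 2 * v j ^ 2 ≤
      ∑' j, (1 - learnability lam c' j) ^ 2 * v j ^ 2 :=
  Summable.tsum_le_tsum
    (fun j => mul_le_mul_of_nonneg_right (one_sub_sq_le_one_sub_sq (hlam j) hc h) (sq_nonneg _))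
    (summable_one_sub_sq_mul hlam hv hc) (summable_one_sub_sq_mul hlam hv (hc.trans_le h))

end learnability

theorem cost_of_overfitting_lower_bound_general
    (n : ℕ)
    (lam : ℕ → ℝ) (hlam_nonneg : ∀ i, 0 ≤ lam i)
    (hlam_summable : Summable lam) (hlam_ne : ∃ i, lam i ≠ 0)
    (v : ℕ → ℝ) (hv : Summable fun i => v i ^ 2)
    (σ2 : ℝ) (hσ2 : 0 ≤ σ2)
    (κ : ℝ → ℝ)
    (hκ_pos : ∀ δ, 0 ≤ δ → 0 < κ δ)
    (hκ_eq : ∀ δ, 0 ≤ δ → ∑' i, lam i / (lam i + κ δ) + δ / κ δ = (n : ℝ))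
    (E : ℝ → ℝ)
    (hE : ∀ δ, E δ = (n : ℝ) / ((n : ℝ) - ∑' i, (lam i / (lam i + κ δ)) ^ 2))
    (Rt : ℝ → ℝ)
    (hRt : ∀ δ, Rt δ = E δ * (∑' i, (1 - lam i / (lam i + κ δ)) ^ 2 * v i ^ 2 + σ2)) :
    E 0 * σ2 ≤ Rt 0 ∧
      E 0 * σ2 / sInf (Rt '' {δ : ℝ | 0 ≤ δ}) ≤ Rt 0 / sInf (Rt '' {δ : ℝ | 0 ≤ δ}) ∧
      Rt 0 / sInf (Rt '' {δ : ℝ | 0 ≤ δ}) ≤ E 0 := by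
  obtain ⟨i, hi⟩ : ∃ i, 0 < lam i := hlam_ne.imp fun i h => (hlam_nonneg i).lt_of_ne' h
  have hsum_le : ∀ δ, 0 ≤ δ → ∑' j, lam j / (lam j + κ δ) ≤ n := fun δ hδ => by
    linarith [hκ_eq δ hδ, div_nonneg hδ (hκ_pos δ hδ).le]
  have hE_ge : ∀ δ, 0 ≤ δ → 1 ≤ E δ := fun δ hδ =>
    hE δ ▸ learnability.one_le_div_sub_tsum_sq hlam_nonneg hlam_summable hi (hκ_pos δ hδ)
      (hsum_le δ hδ)
  have hκ_ge : ∀ δ, 0 ≤ δ → κ 0 ≤ κ δ := fun δ hδ => by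
    have hn := hκ_eq 0 le_rfl
    rw [zero_div, add_zero] at hn
    exact ((learnability.strictAntiOn_tsum hlam_nonneg hlam_summable hi).le_iff_ge (hκ_pos δ hδ)
      (hκ_pos 0 le_rfl)).1 ((hsum_le δ hδ).trans hn.ge)
  set m := ∑' j, (1 - lam j / (lam j + κ 0)) ^ 2 * v j ^ 2 + σ2
  have hm : 0 ≤ m := add_nonneg (tsum_nonneg fun _ => by positivity) hσ2
  have hRt_ge : ∀ δ, 0 ≤ δ → m ≤ Rt δ := fun δ hδ => by
    rw [hRt δ]
    refine le_trans ?_ (le_mul_of_one_le_left (by positivity) (hE_ge δ hδ))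
    exact add_le_add_left
      (learnability.tsum_one_sub_sq_mul_mono hlam_nonneg hv (hκ_pos 0 le_rfl) (hκ_ge δ hδ)) σ2
  have hm_le_inf : m ≤ sInf (Rt '' {δ : ℝ | 0 ≤ δ}) :=
    le_csInf ⟨Rt 0, 0, le_refl (0 : ℝ), rfl⟩ (by rintro _ ⟨δ, hδ, rfl⟩; exact hRt_ge δ hδ)
  have hE0 : 0 ≤ E 0 := zero_le_one.trans (hE_ge 0 le_rfl)
  have hinf : 0 ≤ sInf (Rt '' {δ : ℝ | 0 ≤ δ}) := hm.trans hm_le_inf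
  have hnoise : E 0 * σ2 ≤ Rt 0 := by
    rw [hRt 0]
    exact mul_le_mul_of_nonneg_left (le_add_of_nonneg_left (tsum_nonneg fun _ => by positivity)) hE0
  refine ⟨hnoise, div_le_div_of_nonneg_right hnoise hinf, div_le_of_le_mul₀ hinf hE0 ?_⟩
  rw [hRt 0]
  exact mul_le_mul_of_nonneg_left hm_le_inf hE0

/-- `R̃_0 ≥ E_0 · σ²`, and consequently the predicted cost of
overfitting `C̃ = R̃_0 / inf_{δ ≥ 0} R̃_δ` satisfies
`E_0 · σ² / inf_{δ ≥ 0} R̃_δ ≤ C̃ ≤ E_0`. -/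
theorem cost_of_overfitting_lower_bound
    (n : ℕ) (hn : 1 ≤ n)
    (lam : ℕ → ℝ) (hlam_nonneg : ∀ i, 0 ≤ lam i) (hlam_mono : Antitone lam)
    (hlam_summable : Summable lam) (hlam_ne : ∃ i, lam i ≠ 0)
    (v : ℕ → ℝ) (hv : Summable fun i => v i ^ 2)
    (σ2 : ℝ) (hσ2 : 0 ≤ σ2)
    (κ : ℝ → ℝ)
    (hκ_pos : ∀ δ, 0 ≤ δ → 0 < κ δ)
    (hκ_eq : ∀ δ, 0 ≤ δ → ∑' i, lam i / (lam i + κ δ) + δ / κ δ = (n : ℝ))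
    (E : ℝ → ℝ)
    (hE : ∀ δ, E δ = (n : ℝ) / ((n : ℝ) - ∑' i, (lam i / (lam i + κ δ)) ^ 2))
    (Rt : ℝ → ℝ)
    (hRt : ∀ δ, Rt δ = E δ * (∑' i, (1 - lam i / (lam i + κ δ)) ^ 2 * v i ^ 2 + σ2)) :
    E 0 * σ2 ≤ Rt 0 ∧
      E 0 * σ2 / sInf (Rt '' {δ : ℝ | 0 ≤ δ}) ≤ Rt 0 / sInf (Rt '' {δ : ℝ | 0 ≤ δ}) ∧
      Rt 0 / sInf (Rt '' {δ : ℝ | 0 ≤ δ}) ≤ E 0 :=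
  cost_of_overfitting_lower_bound_general n lam hlam_nonneg hlam_summable hlam_ne v hv σ2 hσ2 κ
    hκ_pos hκ_eq E hE Rt hRt
end

section
/- If lim_{k→∞} k/r_k = ∞, then overfitting is catastrophic: lim_{n→∞} E_0(n) = ∞. -/
/-!
Write `f i = λ_i / (λ_i + κ)`, so that `n - ∑ f i ^ 2 = ∑ f i (1 - f i)` and `E_0(n) = n / ∑ f i (1 - f i)`.
Given `η ≤ 1/2`, split the sum at the first index `m` with `λ_m < κ / η`. Before `m` we have
`1 - f i ≤ η`, so the head contributes at most `η n`, and `m (1 - η) ≤ ∑ f i = n` gives `m ≤ 2 n`.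
The tail contributes at most `∑_{i ≥ m} λ_i / κ = r_m λ_m / κ < r_m / η`. The hypothesis `k / r_k → ∞`
says `r_k ≤ η² k + R`, hence `n - ∑ f i ^ 2 ≤ 3 η n + R / η`: the denominator of `E_0(n)` is `o(n)`.
-/

open Filter Finset Topology

noncomputable def effectiveRank (lam : ℕ → ℝ) (k : ℕ) : ℝ :=
  (∑' i, lam (k + i)) / lam k

theorem exists_le_mul_add_of_tendsto_div_atTop {r : ℕ → ℝ}
    (h : Tendsto (fun k : ℕ => (k : ℝ) / r k) atTop atTop) {δ : ℝ} (hδ : 0 < δ) :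
    ∃ R, ∀ k, r k ≤ δ * k + R := by
  have hev : ∀ᶠ k : ℕ in atTop, r k - δ * k ≤ 0 := by
    filter_upwards [h.eventually_ge_atTop δ⁻¹] with k hk
    have hδinv : 0 < δ⁻¹ := inv_pos.2 hδ
    have hrk : 0 < r k := by
      by_contra! hrk
      linarith [div_nonpos_of_nonneg_of_nonpos k.cast_nonneg hrk]
    rw [le_div_iff₀ hrk, inv_mul_le_iff₀ hδ] at hk
    linarith
  obtain ⟨R, hR⟩ := (isBoundedUnder_of_eventually_le hev).bddAbove_range
  exact ⟨R, fun k => by linarith [hR ⟨k, rfl⟩]⟩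

theorem exists_lt_forall_le_of_tendsto_zero {u : ℕ → ℝ} (hu : Tendsto u atTop (𝓝 0)) {c : ℝ}
    (hc : 0 < c) : ∃ m, u m < c ∧ ∀ i < m, c ≤ u i := by
  classical
  have hex : ∃ i, u i < c := (hu.eventually_lt_const hc).exists
  exact ⟨Nat.find hex, Nat.find_spec hex, fun i hi => not_lt.1 (Nat.find_min hex hi)⟩

theorem tendsto_natCast_div_atTop_of_le_mul_add {u : ℕ → ℝ} (hpos : ∀ᶠ n in atTop, 0 < u n)
    (h : ∀ ε > 0, ∃ R, ∀ᶠ n : ℕ in atTop, u n ≤ ε * n + R) :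
    Tendsto (fun n : ℕ => (n : ℝ) / u n) atTop atTop := by
  have hpos' : ∀ᶠ n : ℕ in atTop, 0 < u n / n := by
    filter_upwards [hpos, eventually_gt_atTop 0] with n hn hn0 using div_pos hn (by positivity)
  have hsmall : ∀ a > 0, ∀ᶠ n : ℕ in atTop, u n / n < a := by
    intro a ha
    obtain ⟨R, hR⟩ := h (a / 2) (half_pos ha)
    filter_upwards [hR, (tendsto_const_div_atTop_nhds_zero_nat R).eventually_lt_const (half_pos ha),
      eventually_gt_atTop 0] with n hn hRn hn0
    have hn0' : (0 : ℝ) < n := by positivity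
    rw [div_lt_iff₀ hn0'] at hRn ⊢
    linarith
  have hlim : Tendsto (fun n : ℕ => u n / n) atTop (𝓝[>] 0) :=
    tendsto_nhdsWithin_iff.2 ⟨tendsto_order.2 ⟨fun a ha => hpos'.mono fun n hn => ha.trans hn,
      hsmall⟩, hpos'⟩
  exact hlim.inv_tendsto_nhdsGT_zero.congr fun n => inv_div (u n) n

section UnitIntervalSequence

variable {f : ℕ → ℝ}

theorem summable_sq_of_nonneg_of_le_one (hf : Summable f) (h0 : ∀ i, 0 ≤ f i) (h1 : ∀ i, f i ≤ 1) :
    Summable fun i => f i ^ 2 :=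
  hf.of_nonneg_of_le (fun i => sq_nonneg _) fun i => by nlinarith [h0 i, h1 i]

theorem tsum_sq_lt_tsum (hf : Summable f) (h0 : ∀ i, 0 < f i) (h1 : ∀ i, f i < 1) :
    ∑' i, f i ^ 2 < ∑' i, f i :=
  (summable_sq_of_nonneg_of_le_one hf (fun i => (h0 i).le) fun i => (h1 i).le).tsum_lt_tsum
    (i := 0) (fun i => by nlinarith [h0 i, h1 i]) (by nlinarith [h0 0, h1 0]) hf

theorem natCast_mul_one_sub_le_tsum (hf : Summable f) (h0 : ∀ i, 0 ≤ f i) {m : ℕ} {ε : ℝ}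
    (hm : ∀ i < m, 1 - f i ≤ ε) : m * (1 - ε) ≤ ∑' i, f i :=
  calc (m : ℝ) * (1 - ε) = ∑ _i ∈ range m, (1 - ε) := by rw [sum_const, card_range, nsmul_eq_mul]
    _ ≤ ∑ i ∈ range m, f i := sum_le_sum fun i hi => by linarith [hm i (mem_range.1 hi)]
    _ ≤ ∑' i, f i := hf.sum_le_tsum _ fun i _ => h0 i

theorem tsum_sub_tsum_sq_le (hf : Summable f) (h0 : ∀ i, 0 ≤ f i) (h1 : ∀ i, f i ≤ 1)
    {m : ℕ} {ε : ℝ} (hε : 0 ≤ ε) (hm : ∀ i < m, 1 - f i ≤ ε) :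
    ∑' i, f i - ∑' i, f i ^ 2 ≤ ε * ∑' i, f i + ∑' i, f (i + m) := by
  have hf2 := summable_sq_of_nonneg_of_le_one hf h0 h1
  have hg : Summable fun i => f i - f i ^ 2 := hf.sub hf2
  have hhead : ∑ i ∈ range m, (f i - f i ^ 2) ≤ ε * ∑' i, f i :=
    calc ∑ i ∈ range m, (f i - f i ^ 2) ≤ ∑ i ∈ range m, ε * f i :=
          sum_le_sum fun i hi => by nlinarith [hm i (mem_range.1 hi), h0 i]
      _ = ε * ∑ i ∈ range m, f i := (mul_sum _ _ _).symm
      _ ≤ ε * ∑' i, f i := mul_le_mul_of_nonneg_left (hf.sum_le_tsum _ fun i _ => h0 i) hε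
  have htail : ∑' i, (f (i + m) - f (i + m) ^ 2) ≤ ∑' i, f (i + m) :=
    ((summable_nat_add_iff m).2 hg).tsum_le_tsum (fun i => by nlinarith [h0 (i + m)])
      ((summable_nat_add_iff m).2 hf)
  rw [← hf.tsum_sub hf2, ← hg.sum_add_tsum_nat_add m]
  linarith

end UnitIntervalSequence

section ResolventWeights

variable {lam : ℕ → ℝ} {κ : ℝ}

theorem summable_div_add (hlam : ∀ i, 0 < lam i) (hs : Summable lam) (hκ : 0 < κ) :
    Summable fun i => lam i / (lam i + κ) :=
  (hs.div_const κ).of_nonneg_of_le (fun i => by have := hlam i; positivity)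
    fun i => div_le_div_of_nonneg_left (hlam i).le hκ (by linarith [hlam i])

theorem tsum_sq_div_add_lt (hlam : ∀ i, 0 < lam i) (hs : Summable lam) (hκ : 0 < κ) :
    ∑' i, (lam i / (lam i + κ)) ^ 2 < ∑' i, lam i / (lam i + κ) :=
  tsum_sq_lt_tsum (summable_div_add hlam hs hκ) (fun i => by have := hlam i; positivity)
    fun i => (div_lt_one (by linarith [hlam i])).2 (by linarith)

theorem tsum_div_add_nat_add_le (hlam : ∀ i, 0 < lam i) (hs : Summable lam) (hκ : 0 < κ)
    (m : ℕ) : ∑' i, lam (i + m) / (lam (i + m) + κ) ≤ effectiveRank lam m * lam m / κ :=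
  calc ∑' i, lam (i + m) / (lam (i + m) + κ) ≤ ∑' i, lam (i + m) / κ :=
        ((summable_nat_add_iff m).2 (summable_div_add hlam hs hκ)).tsum_le_tsum
          (fun i => div_le_div_of_nonneg_left (hlam _).le hκ (by linarith [hlam (i + m)]))
          (((summable_nat_add_iff m).2 hs).div_const κ)
    _ = effectiveRank lam m * lam m / κ := by
        rw [tsum_div_const, effectiveRank, div_mul_cancel₀ _ (hlam m).ne']
        simp only [add_comm]

theorem sub_tsum_sq_div_add_le (hlam : ∀ i, 0 < lam i) (hs : Summable lam) (hκ : 0 < κ)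
    {n η R : ℝ} (hn : ∑' i, lam i / (lam i + κ) = n) (hη : 0 < η) (hη2 : η ≤ 1 / 2)
    (hR : ∀ k, effectiveRank lam k ≤ η ^ 2 * k + R) :
    n - ∑' i, (lam i / (lam i + κ)) ^ 2 ≤ 3 * η * n + R / η := by
  set f := fun i => lam i / (lam i + κ) with hf_def
  have hf := summable_div_add hlam hs hκ
  have h0 : ∀ i, 0 ≤ f i := fun i => by have := hlam i; positivity
  have h1 : ∀ i, f i ≤ 1 := fun i => (div_le_one (by linarith [hlam i])).2 (by linarith)
  obtain ⟨m, hm_lt, hm_le⟩ := exists_lt_forall_le_of_tendsto_zero hs.tendsto_atTop_zero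
    (div_pos hκ hη)
  have hhead : ∀ i < m, 1 - f i ≤ η := fun i hi => by
    have hi := (div_le_iff₀ hη).1 (hm_le i hi)
    have : 1 - f i = κ / (lam i + κ) := by
      simp only [hf_def]; field_simp [(by linarith [hlam i] : lam i + κ ≠ 0)]; ring
    rw [this, div_le_iff₀ (by linarith [hlam i])]
    nlinarith [hlam i]
  have hm : (m : ℝ) ≤ 2 * n := by
    nlinarith [natCast_mul_one_sub_le_tsum hf h0 hhead]
  have hrank : 0 ≤ effectiveRank lam m := div_nonneg
    (tsum_nonneg fun i => (hlam _).le) (hlam m).le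
  have htail : ∑' i, f (i + m) ≤ η * m + R / η :=
    calc ∑' i, f (i + m) ≤ effectiveRank lam m * (lam m / κ) := by
          rw [← mul_div_assoc]; exact tsum_div_add_nat_add_le hlam hs hκ m
      _ ≤ (η ^ 2 * m + R) * (1 / η) := by
          refine mul_le_mul (hR m) ?_ (div_nonneg (hlam m).le hκ.le) (hrank.trans (hR m))
          rw [div_le_div_iff₀ hκ hη]; linarith [(lt_div_iff₀ hη).1 hm_lt]
      _ = η * m + R / η := by field_simp
  have := tsum_sub_tsum_sq_le hf h0 h1 hη.le hhead
  rw [hn] at this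
  nlinarith

end ResolventWeights

theorem catastrophic_overfitting_of_k_div_rk_tendsto_atTop_general
    (lam : ℕ → ℝ) (hlam_pos : ∀ i, 0 < lam i)
    (hlam_summable : Summable lam)
    (κ : ℕ → ℝ) (hκ_pos : ∀ n, 1 ≤ n → 0 < κ n)
    (hκ_eq : ∀ n : ℕ, 1 ≤ n → ∑' i, lam i / (lam i + κ n) = (n : ℝ))
    (E : ℕ → ℝ)
    (hE : ∀ n : ℕ, E n = (n : ℝ) / ((n : ℝ) - ∑' i, (lam i / (lam i + κ n)) ^ 2))
    (r : ℕ → ℝ) (hr : ∀ j, r j = (∑' i, lam (j + i)) / lam j)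
    (h : Filter.Tendsto (fun k : ℕ => (k : ℝ) / r k) Filter.atTop Filter.atTop) :
    Filter.Tendsto E Filter.atTop Filter.atTop := by
  obtain rfl : r = effectiveRank lam := funext hr
  rw [funext hE]
  refine tendsto_natCast_div_atTop_of_le_mul_add ?_ fun ε hε => ?_
  · filter_upwards [eventually_ge_atTop 1] with n hn
    rw [sub_pos, ← hκ_eq n hn]
    exact tsum_sq_div_add_lt hlam_pos hlam_summable (hκ_pos n hn)
  · set η := min (ε / 3) (1 / 2)
    have hη : 0 < η := lt_min (by positivity) (by norm_num)
    have hηε : 3 * η ≤ ε := by linarith [min_le_left (ε / 3) (1 / 2)]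
    obtain ⟨R, hR⟩ := exists_le_mul_add_of_tendsto_div_atTop h (pow_pos hη 2)
    refine ⟨R / η, ?_⟩
    filter_upwards [eventually_ge_atTop 1] with n hn
    have := sub_tsum_sq_div_add_le hlam_pos hlam_summable (hκ_pos n hn) (hκ_eq n hn) hη
      (min_le_right _ _) hR
    nlinarith [n.cast_nonneg (α := ℝ)]

/-- If `lim_{k→∞} k/r_k = ∞`, then overfitting is catastrophic:
`lim_{n→∞} E_0(n) = ∞`. -/
theorem catastrophic_overfitting_of_k_div_rk_tendsto_atTop
    (lam : ℕ → ℝ) (hlam_pos : ∀ i, 0 < lam i) (hlam_mono : Antitone lam)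
    (hlam_summable : Summable lam)
    (κ : ℕ → ℝ) (hκ_pos : ∀ n, 1 ≤ n → 0 < κ n)
    (hκ_eq : ∀ n : ℕ, 1 ≤ n → ∑' i, lam i / (lam i + κ n) = (n : ℝ))
    (E : ℕ → ℝ)
    (hE : ∀ n : ℕ, E n = (n : ℝ) / ((n : ℝ) - ∑' i, (lam i / (lam i + κ n)) ^ 2))
    (r : ℕ → ℝ) (hr : ∀ j, r j = (∑' i, lam (j + i)) / lam j)
    (h : Filter.Tendsto (fun k : ℕ => (k : ℝ) / r k) Filter.atTop Filter.atTop) :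
    Filter.Tendsto E Filter.atTop Filter.atTop :=
  catastrophic_overfitting_of_k_div_rk_tendsto_atTop_general lam hlam_pos hlam_summable κ hκ_pos
    hκ_eq E hE r hr h
end
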